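/- arXiv:2411.01832 — 8 statements merged into one kernel-verified Lean document; each statement's English description precedes it below -/
import Mathlib

section
/- Let a ≥ 1 and let i, j be positive integers with p^a·i - j ≥ 0. Then s_p(p^a·i - j) ≥ a(p-1) + s_p(i-1) - s_p(j-1). -/
/-- Sum of the base-`p` digits of `n`. -/
def digitSum (p n : ℕ) : ℕ := (Nat.digits p n).sum

open Finset Nat

/-- If `d ∣ x + y + 1` then `x/d + y/d + 1 = (x+y+1)/d`. -/
lemma aux_div_add_div_add_one {d x y : ℕ} (hd : 0 < d) (h : d ∣ x + y + 1) :
    x / d + y / d + 1 = (x + y + 1) / d := by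
  have hx := Nat.div_add_mod x d
  have hy := Nat.div_add_mod y d
  have hxr : x % d < d := Nat.mod_lt _ hd
  have hyr : y % d < d := Nat.mod_lt _ hd
  have h1 : d ∣ (x % d + y % d + 1) := by
    have h2 : x % d + y % d + 1 = (x + y + 1) - d * (x / d) - d * (y / d) := by omega
    rw [h2]
    exact Nat.dvd_sub (Nat.dvd_sub h (Dvd.intro _ rfl)) (Dvd.intro _ rfl)
  obtain ⟨c, hc⟩ := h1
  have hc0 : c ≠ 0 := by rintro rfl; omega
  have hc2 : c < 2 := by
    by_contra hcon
    have : d * 2 ≤ d * c := Nat.mul_le_mul_left d (by omega)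
    omega
  have hc1 : c = 1 := by omega
  subst hc1
  have hsum : x + y + 1 = d * (x / d + y / d + 1) := by
    rw [Nat.mul_add, Nat.mul_add, Nat.mul_one]; omega
  rw [hsum, Nat.mul_div_cancel_left _ hd]

lemma aux_part1 {p a i j k : ℕ} (hp : 0 < p) (hka : k ≤ a)
    (hj : 0 < j) (hle : j ≤ p ^ a * i) :
    (p ^ a * i - j) / p ^ k + (j - 1) / p ^ k + 1 = p ^ (a - k) * i := by
  have hd : 0 < p ^ k := Nat.pow_pos (n := k) hp
  have hsum : (p ^ a * i - j) + (j - 1) + 1 = p ^ a * i := by omega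
  have hdvd : p ^ k ∣ (p ^ a * i - j) + (j - 1) + 1 := by
    rw [hsum]; exact Dvd.dvd.mul_right (pow_dvd_pow p hka) i
  rw [aux_div_add_div_add_one hd hdvd, hsum]
  have h3 : p ^ a * i = p ^ (a - k) * i * p ^ k := by
    rw [mul_right_comm, ← pow_add]
    congr 2
    omega
  rw [h3, Nat.mul_div_cancel _ hd]

lemma aux_part2 {p a i j k : ℕ} (hp : 0 < p) (hi : 0 < i) (hj : 0 < j) (hka : a ≤ k)
    (hle : j ≤ p ^ a * i) :
    (p ^ a * i - j) / p ^ k + (j - 1) / p ^ k ≤ (i - 1) / p ^ (k - a) := by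
  have hd : 0 < p ^ a := Nat.pow_pos (n := a) hp
  obtain ⟨q, rfl⟩ : ∃ q, i = q + 1 := ⟨i - 1, by omega⟩
  obtain ⟨m, rfl⟩ : ∃ m, k = a + m := ⟨k - a, by omega⟩
  have he : p ^ a * (q + 1) - j + (j - 1) = p ^ a * q + (p ^ a - 1) := by
    have h2 : p ^ a * (q + 1) = p ^ a * q + p ^ a := by ring
    generalize p ^ a * (q + 1) = M at *
    generalize p ^ a * q = K at *
    omega
  have h0 : (p ^ a - 1) / p ^ a = 0 := Nat.div_eq_of_lt (by omega)
  calc (p ^ a * (q + 1) - j) / p ^ (a + m) + (j - 1) / p ^ (a + m)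
      ≤ ((p ^ a * (q + 1) - j) + (j - 1)) / p ^ (a + m) := Nat.add_div_le_add_div _ _ _
    _ = (p ^ a * q + (p ^ a - 1)) / p ^ (a + m) := by rw [he]
    _ = (q + 1 - 1) / p ^ (a + m - a) := by
        rw [Nat.add_sub_cancel_left, Nat.add_sub_cancel, pow_add,
          ← Nat.div_div_eq_div_mul, Nat.mul_add_div hd, h0, Nat.add_zero]

/-- Legendre's theorem, over ℤ. -/
lemma aux_legendre (p : ℕ) (hp : p.Prime) (n : ℕ) :
    ((p : ℤ) - 1) * padicValNat p (n !) = (n : ℤ) - digitSum p n := by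
  haveI : Fact p.Prime := ⟨hp⟩
  have h3 : (p - 1) * padicValNat p (n !) = n - digitSum p n :=
    sub_one_mul_padicValNat_factorial (p := p) n
  have h2 : digitSum p n ≤ n := Nat.digit_sum_le p n
  have hp1 : 1 ≤ p := hp.one_lt.le
  have h4 : ((n - digitSum p n : ℕ) : ℤ) = (n : ℤ) - digitSum p n := by
    push_cast [h2]; ring
  rw [← h4, ← h3]
  push_cast [hp1]
  ring

/-- The key inequality on valuations of factorials. -/
lemma aux_star (p a i j : ℕ) (hp : p.Prime) (hi : 0 < i) (hj : 0 < j)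
    (hle : j ≤ p ^ a * i) :
    padicValNat p ((p ^ a * i - j)!) + padicValNat p ((j - 1)!) + a ≤
      (∑ m ∈ range a, p ^ m) * i + padicValNat p ((i - 1)!) := by
  haveI : Fact p.Prime := ⟨hp⟩
  have hpp : 0 < p := hp.pos
  set B := max (Nat.log p (p ^ a * i - j)) (max (Nat.log p (i - 1)) (Nat.log p (j - 1))) + 1
    with hB
  have h1 : Nat.log p (p ^ a * i - j) < a + B := by omega
  have h2 : Nat.log p (j - 1) < a + B := by omega
  have h3 : Nat.log p (i - 1) < B := by omega
  rw [padicValNat_factorial h1, padicValNat_factorial h2, padicValNat_factorial h3]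
  have hsplit : ∀ n : ℕ, ∑ k ∈ Ico 1 (a + B), n / p ^ k =
      ∑ k ∈ Ico 1 (a + 1), n / p ^ k + ∑ k ∈ Ico (a + 1) (a + B), n / p ^ k := by
    intro n
    rw [Finset.sum_Ico_consecutive _ (by omega) (by omega)]
  rw [hsplit, hsplit]
  have hmain : ∑ k ∈ Ico 1 (a + 1), ((p ^ a * i - j) / p ^ k + (j - 1) / p ^ k + 1)
      = (∑ m ∈ range a, p ^ m) * i := by
    have e1 : ∀ k ∈ Ico 1 (a + 1), (p ^ a * i - j) / p ^ k + (j - 1) / p ^ k + 1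
        = p ^ (a - k) * i := fun k hk =>
      aux_part1 hpp (by simp only [Finset.mem_Ico] at hk; omega) hj hle
    rw [Finset.sum_congr rfl e1, Finset.sum_Ico_eq_sum_range]
    simp only [Nat.add_sub_cancel]
    rw [Finset.sum_mul, ← Finset.sum_range_reflect (fun m => p ^ m * i) a]
    refine Finset.sum_congr rfl fun m hm => ?_
    simp only [Finset.mem_range] at hm
    congr 2
    omega
  have key1 : ∑ k ∈ Ico 1 (a + 1), (p ^ a * i - j) / p ^ k
      + ∑ k ∈ Ico 1 (a + 1), (j - 1) / p ^ k + a = (∑ m ∈ range a, p ^ m) * i := by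
    have hc : ∑ k ∈ Ico 1 (a + 1), ((p ^ a * i - j) / p ^ k + (j - 1) / p ^ k + 1)
        = ∑ k ∈ Ico 1 (a + 1), (p ^ a * i - j) / p ^ k
          + ∑ k ∈ Ico 1 (a + 1), (j - 1) / p ^ k + ∑ _k ∈ Ico 1 (a + 1), 1 := by
      rw [Finset.sum_add_distrib, Finset.sum_add_distrib]
    have hcard : ∑ _k ∈ Ico 1 (a + 1), 1 = a := by simp
    rw [← hmain, hc, hcard]
  have key2 : ∑ k ∈ Ico (a + 1) (a + B), (p ^ a * i - j) / p ^ k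
      + ∑ k ∈ Ico (a + 1) (a + B), (j - 1) / p ^ k ≤ ∑ k ∈ Ico 1 B, (i - 1) / p ^ k := by
    rw [← Finset.sum_add_distrib]
    calc ∑ k ∈ Ico (a + 1) (a + B), ((p ^ a * i - j) / p ^ k + (j - 1) / p ^ k)
        ≤ ∑ k ∈ Ico (a + 1) (a + B), (i - 1) / p ^ (k - a) :=
          Finset.sum_le_sum fun k hk =>
            aux_part2 hpp hi hj (by simp only [Finset.mem_Ico] at hk; omega) hle
      _ = ∑ k ∈ Ico 1 B, (i - 1) / p ^ k := by
          rw [Finset.sum_Ico_eq_sum_range, Finset.sum_Ico_eq_sum_range]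
          refine Finset.sum_congr (by congr 1; omega) fun m hm => ?_
          congr 2
          omega
  linarith [key1, key2]

theorem digitSum_pow_mul_sub (p a i j : ℕ) (hp : p.Prime) (ha : 1 ≤ a)
    (hi : 0 < i) (hj : 0 < j) (hle : j ≤ p ^ a * i) :
    (a * (p - 1) + digitSum p (i - 1) : ℤ) - digitSum p (j - 1) ≤
      (digitSum p (p ^ a * i - j) : ℤ) := by
  haveI : Fact p.Prime := ⟨hp⟩
  have hpp : 0 < p := hp.pos
  have hstar := aux_star p a i j hp hi hj hle
  have hL1 := aux_legendre p hp (p ^ a * i - j)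
  have hL2 := aux_legendre p hp (i - 1)
  have hL3 := aux_legendre p hp (j - 1)
  have hp1 : (1 : ℤ) ≤ p := by exact_mod_cast hp.one_lt.le
  have hcast : ((padicValNat p ((p ^ a * i - j)!) : ℤ) + padicValNat p ((j - 1)!) + a)
      ≤ (∑ m ∈ range a, (p : ℤ) ^ m) * i + padicValNat p ((i - 1)!) := by
    exact_mod_cast hstar
  have hgeom : (∑ m ∈ range a, (p : ℤ) ^ m) * ((p : ℤ) - 1) = (p : ℤ) ^ a - 1 :=
    geom_sum_mul _ _
  have hstarZ : ((p : ℤ) - 1) * (padicValNat p ((p ^ a * i - j)!))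
      + ((p : ℤ) - 1) * (padicValNat p ((j - 1)!)) + (a : ℤ) * ((p : ℤ) - 1)
      ≤ ((p : ℤ) ^ a - 1) * i + ((p : ℤ) - 1) * (padicValNat p ((i - 1)!)) := by
    calc ((p : ℤ) - 1) * (padicValNat p ((p ^ a * i - j)!))
        + ((p : ℤ) - 1) * (padicValNat p ((j - 1)!)) + (a : ℤ) * ((p : ℤ) - 1)
        = ((p : ℤ) - 1) * ((padicValNat p ((p ^ a * i - j)!) : ℤ)
            + padicValNat p ((j - 1)!) + a) := by ring
      _ ≤ ((p : ℤ) - 1) * ((∑ m ∈ range a, (p : ℤ) ^ m) * i + padicValNat p ((i - 1)!)) :=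
          mul_le_mul_of_nonneg_left hcast (by linarith)
      _ = ((p : ℤ) ^ a - 1) * i + ((p : ℤ) - 1) * (padicValNat p ((i - 1)!)) := by
          linear_combination (i : ℤ) * hgeom
  have hNcast : ((p ^ a * i - j : ℕ) : ℤ) = (p : ℤ) ^ a * i - j := by
    push_cast [hle]; ring
  have hicast : ((i - 1 : ℕ) : ℤ) = (i : ℤ) - 1 := by push_cast [hi]; ring
  have hjcast : ((j - 1 : ℕ) : ℤ) = (j : ℤ) - 1 := by push_cast [hj]; ring
  rw [hNcast] at hL1
  rw [hicast] at hL2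
  rw [hjcast] at hL3
  linarith [hstarZ, hL1, hL2, hL3]
end

section
/- Let a ≥ 1 and let i, j be positive integers with p^a·i - j ≥ 0 and j ≤ p^a. Then s_p(p^a·i - j) = a(p-1) + s_p(i-1) - s_p(j-1). -/
lemma digitSum_mul_add (p q r : ℕ) (hp : 2 ≤ p) (hr : r < p) :
    digitSum p (p * q + r) = r + digitSum p q := by
  unfold digitSum
  rcases Nat.eq_zero_or_pos q with hq | hq
  · subst hq
    rcases Nat.eq_zero_or_pos r with h | h
    · simp [h]
    · rw [Nat.digits_of_lt p (p * 0 + r) (by omega) (by omega)]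
      simp
  · rw [Nat.digits_def' (by omega : 1 < p) (by positivity),
      Nat.mul_add_div (by omega), Nat.mul_add_mod,
      Nat.div_eq_of_lt hr, Nat.mod_eq_of_lt hr]
    simp [Nat.add_comm]

lemma digitSum_pow_mul_add (p a : ℕ) (hp : 2 ≤ p) :
    ∀ m r : ℕ, r < p ^ a → digitSum p (p ^ a * m + r) = digitSum p r + digitSum p m := by
  induction a with
  | zero =>
    intro m r hr
    rw [pow_zero] at hr ⊢
    have : r = 0 := by omega
    subst this
    simp [digitSum]
  | succ a ih =>
    intro m r hr
    have hdiv : r / p < p ^ a := by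
      rw [Nat.div_lt_iff_lt_mul (by omega)]
      calc r < p ^ (a + 1) := hr
        _ = p ^ a * p := by ring
    have hmod : r % p < p := Nat.mod_lt _ (by omega)
    have key : p ^ (a + 1) * m + r = p * (p ^ a * m + r / p) + r % p := by
      conv_lhs => rw [← Nat.div_add_mod r p]
      rw [pow_succ]
      ring
    rw [key, digitSum_mul_add p _ _ hp hmod, ih m (r / p) hdiv]
    have : digitSum p r = r % p + digitSum p (r / p) := by
      conv_lhs => rw [← Nat.div_add_mod r p]
      exact digitSum_mul_add p (r / p) (r % p) hp hmod
    omega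

lemma digitSum_complement (p a : ℕ) (hp : 2 ≤ p) :
    ∀ m : ℕ, m < p ^ a → digitSum p (p ^ a - 1 - m) + digitSum p m = a * (p - 1) := by
  induction a with
  | zero =>
    intro m hm
    rw [pow_zero] at hm
    have : m = 0 := by omega
    subst this
    simp [digitSum]
  | succ a ih =>
    intro m hm
    set q := m / p with hq
    set r := m % p with hr
    have hqlt : q < p ^ a := by
      rw [hq, Nat.div_lt_iff_lt_mul (by omega)]
      calc m < p ^ (a + 1) := hm
        _ = p ^ a * p := by ring
    have hrlt : r < p := Nat.mod_lt _ (by omega)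
    have hmqr : m = p * q + r := (Nat.div_add_mod m p).symm
    have hpa : 1 ≤ p ^ a := Nat.one_le_pow _ _ (by omega)
    have key : p ^ (a + 1) - 1 - m = p * (p ^ a - 1 - q) + (p - 1 - r) := by
      rw [hmqr]
      zify [(show p * q + r ≤ p ^ (a + 1) - 1 by omega),
        (show 1 ≤ p ^ (a + 1) by omega), (show q ≤ p ^ a - 1 by omega),
        (show r ≤ p - 1 by omega), (show 1 ≤ p by omega), hpa]
      push_cast
      rw [pow_succ]
      ring
    rw [key, hmqr, digitSum_mul_add p _ _ hp (by omega),
      digitSum_mul_add p _ _ hp hrlt]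
    have := ih q hqlt
    rw [Nat.succ_mul]
    omega

theorem digitSum_pow_mul_sub_eq (p a i j : ℕ) (hp : p.Prime) (ha : 1 ≤ a)
    (hi : 0 < i) (hj : 0 < j) (hle : j ≤ p ^ a * i) (hja : j ≤ p ^ a) :
    (digitSum p (p ^ a * i - j) : ℤ) =
      (a * (p - 1) + digitSum p (i - 1) : ℤ) - digitSum p (j - 1) := by
  have hp2 : 2 ≤ p := hp.two_le
  have hpa : 1 ≤ p ^ a := Nat.one_le_pow _ _ (by omega)
  have h1 : p ^ a * i - j = p ^ a * (i - 1) + (p ^ a - j) := by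
    have : p ^ a * i = p ^ a * (i - 1) + p ^ a := by
      conv_lhs => rw [← Nat.sub_add_cancel hi]
      ring
    omega
  have h2 : p ^ a - j = p ^ a - 1 - (j - 1) := by omega
  have h3 : p ^ a - j < p ^ a := by omega
  rw [h1, digitSum_pow_mul_add p a hp2 (i - 1) (p ^ a - j) h3, h2]
  have h4 := digitSum_complement p a hp2 (j - 1) (by omega)
  zify [(show 1 ≤ p by omega)] at h4
  push_cast
  linarith
end

section
/- For all nonnegative integers N and M, s_p(N)·s_p(M) = s_p(N·M) if and only if the base-p multiplication of N and M is carry-free, i.e., for every k ≥ 0 the convolution sum over i+j=k of the i-th base-p digit of N times the j-th base-p digit of M is at most p-1. -/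
/-! Let `A`, `B ∈ ℕ[X]` have the base-`p` digits of `N`, `M` as coefficients. Then
`N * M = (A * B)(p)` and `s_p(N) * s_p(M) = (A * B)(1)`, and the coefficients of `A * B` are the
convolution sums. For any `f ∈ ℕ[X]`, subadditivity of `s_p` and `s_p(c) ≤ c` give
`s_p(f(p)) ≤ Σ s_p(f_k) ≤ Σ f_k = f(1)`, with equality exactly when every `f_k < p`, because
`s_p(c) < c` as soon as `c ≥ p`. Subadditivity comes from Legendre's formula
`(p - 1) * Σ_i ⌊n / p^(i+1)⌋ = n - s_p(n)` and `⌊a / q⌋ + ⌊b / q⌋ ≤ ⌊(a + b) / q⌋`. -/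

open Finset Polynomial

theorem sum_range_succ_mul_pow {R : Type*} [CommSemiring R] (c : ℕ → R) (x : R) (K : ℕ) :
    ∑ k ∈ range (K + 1), c k * x ^ k = c 0 + x * ∑ k ∈ range K, c (k + 1) * x ^ k := by
  rw [sum_range_succ', mul_sum, add_comm]
  simp only [pow_zero, mul_one, pow_succ]
  congr 1
  exact sum_congr rfl fun k _ => by ring

section DigitSum

@[simp]
theorem digitSum_zero (p : ℕ) : digitSum p 0 = 0 := by
  simp [digitSum]

theorem digitSum_le (p n : ℕ) : digitSum p n ≤ n :=
  Nat.digit_sum_le p n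

variable {p : ℕ}

theorem digitSum_add_base_mul_of_lt (hp : 1 < p) {a : ℕ} (ha : a < p) (m : ℕ) :
    digitSum p (a + p * m) = a + digitSum p m := by
  by_cases h : a ≠ 0 ∨ m ≠ 0
  · simp [digitSum, Nat.digits_add p hp a m ha h]
  · obtain ⟨rfl, rfl⟩ : a = 0 ∧ m = 0 := by tauto
    simp [digitSum]

theorem digitSum_base_mul (hp : 1 < p) (m : ℕ) : digitSum p (p * m) = digitSum p m := by
  simpa using digitSum_add_base_mul_of_lt hp (by omega : 0 < p) m

theorem digitSum_eq_self_iff (hp : 1 < p) {n : ℕ} : digitSum p n = n ↔ n < p := by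
  refine ⟨fun h => ?_, fun h => by simpa using digitSum_add_base_mul_of_lt hp h 0⟩
  by_contra! hpn
  have hdiv : 1 ≤ n / p := (Nat.one_le_div_iff (by omega)).2 hpn
  have hn := digitSum_add_base_mul_of_lt hp (Nat.mod_lt n (by omega)) (n / p)
  rw [Nat.mod_add_div] at hn
  have := digitSum_le p (n / p)
  have := Nat.mod_add_div n p
  have : 2 * (n / p) ≤ p * (n / p) := Nat.mul_le_mul_right _ hp
  omega

theorem sub_one_mul_sum_div_pow_eq_sub_digitSum (hp : 1 < p) {n K : ℕ} (hK : Nat.log p n < K) :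
    (p - 1) * ∑ i ∈ range K, n / p ^ (i + 1) = n - digitSum p n := by
  rw [digitSum, ← Nat.sub_one_mul_sum_log_div_pow_eq_sub_sum_digits]
  congr 1
  refine (sum_subset (range_subset_range.2 hK) fun i hiK hi => Nat.div_eq_of_lt ?_).symm
  simp only [mem_range, not_lt] at hi
  exact (Nat.lt_pow_succ_log_self hp n).trans_le (Nat.pow_le_pow_right (by omega) (by omega))

theorem digitSum_add_le (hp : 1 < p) (a b : ℕ) :
    digitSum p (a + b) ≤ digitSum p a + digitSum p b := by
  set K := Nat.log p (a + b) + 1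
  have hK : ∀ n ≤ a + b, Nat.log p n < K := fun n hn =>
    Nat.lt_succ_of_le (Nat.log_mono_right hn)
  have hsum : ∑ i ∈ range K, a / p ^ (i + 1) + ∑ i ∈ range K, b / p ^ (i + 1)
      ≤ ∑ i ∈ range K, (a + b) / p ^ (i + 1) := by
    rw [← sum_add_distrib]
    exact sum_le_sum fun i _ => Nat.div_add_div_le_add_div
  have := Nat.mul_le_mul_left (p - 1) hsum
  rw [mul_add, sub_one_mul_sum_div_pow_eq_sub_digitSum hp (hK a (by omega)),
    sub_one_mul_sum_div_pow_eq_sub_digitSum hp (hK b (by omega)),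
    sub_one_mul_sum_div_pow_eq_sub_digitSum hp (hK _ le_rfl)] at this
  have := digitSum_le p a
  have := digitSum_le p b
  have := digitSum_le p (a + b)
  omega

theorem digitSum_sum_mul_pow_le (hp : 1 < p) (c : ℕ → ℕ) (K : ℕ) :
    digitSum p (∑ k ∈ range K, c k * p ^ k) ≤ ∑ k ∈ range K, c k := by
  induction K generalizing c with
  | zero => simp
  | succ K ih =>
    rw [sum_range_succ_mul_pow, sum_range_succ']
    calc digitSum p (c 0 + p * ∑ k ∈ range K, c (k + 1) * p ^ k)
        ≤ digitSum p (c 0) + digitSum p (∑ k ∈ range K, c (k + 1) * p ^ k) := by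
          rw [← digitSum_base_mul hp (∑ k ∈ range K, c (k + 1) * p ^ k)]
          exact digitSum_add_le hp _ _
      _ ≤ ∑ k ∈ range K, c (k + 1) + c 0 := by
          linarith [digitSum_le p (c 0), ih fun k => c (k + 1)]

theorem digitSum_sum_mul_pow_eq_sum_iff (hp : 1 < p) (c : ℕ → ℕ) (K : ℕ) :
    digitSum p (∑ k ∈ range K, c k * p ^ k) = ∑ k ∈ range K, c k ↔
      ∀ k < K, c k < p := by
  induction K generalizing c with
  | zero => simp
  | succ K ih =>
    rw [sum_range_succ_mul_pow, sum_range_succ', Nat.forall_lt_succ_left', ← ih]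
    constructor
    · intro h
      have := digitSum_add_le hp (c 0) (p * ∑ k ∈ range K, c (k + 1) * p ^ k)
      rw [digitSum_base_mul hp] at this
      have := digitSum_le p (c 0)
      have := digitSum_sum_mul_pow_le hp (fun k => c (k + 1)) K
      refine ⟨(digitSum_eq_self_iff hp).1 (by omega), by omega⟩
    · rintro ⟨h0, h⟩
      rw [digitSum_add_base_mul_of_lt hp h0, h, add_comm]

theorem digitSum_eval_eq_eval_one_iff (hp : 1 < p) (f : ℕ[X]) :
    digitSum p (f.eval p) = f.eval 1 ↔ ∀ k, f.coeff k < p := by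
  rw [eval_eq_sum_range, eval_eq_sum_range]
  simp only [one_pow, mul_one]
  rw [digitSum_sum_mul_pow_eq_sum_iff hp]
  refine ⟨fun h k => ?_, fun h k _ => h k⟩
  rcases lt_or_ge f.natDegree k with hk | hk
  · rw [coeff_eq_zero_of_natDegree_lt hk]
    omega
  · exact h k (Nat.lt_succ_of_le hk)

end DigitSum

theorem eval_ofDigits_X {R : Type*} [CommSemiring R] (x : R) (L : List ℕ) :
    (Nat.ofDigits (X : R[X]) L).eval x = Nat.ofDigits x L := by
  induction L with
  | nil => simp [Nat.ofDigits]
  | cons a L ih => simp [Nat.ofDigits, ih]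

theorem coeff_ofDigits_X {R : Type*} [Semiring R] (L : List ℕ) (k : ℕ) :
    (Nat.ofDigits (X : R[X]) L).coeff k = L.getD k 0 := by
  induction L generalizing k with
  | nil => simp [Nat.ofDigits]
  | cons a L ih => cases k <;> simp [Nat.ofDigits, coeff_natCast_ite, ih]

theorem digitSum_mul_eq_iff_carryFree (p : ℕ) (hp : p.Prime) (N M : ℕ) :
    digitSum p N * digitSum p M = digitSum p (N * M) ↔
      ∀ k : ℕ, (∑ i ∈ Finset.range (k + 1),
        (N / p ^ i % p) * (M / p ^ (k - i) % p)) ≤ p - 1 := by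
  set D : ℕ → ℕ[X] := fun n => Nat.ofDigits X (Nat.digits p n)
  have h_eval_base : (D N * D M).eval p = N * M := by
    simp [D, eval_ofDigits_X, Nat.ofDigits_digits]
  have h_eval_one : (D N * D M).eval 1 = digitSum p N * digitSum p M := by
    simp [D, eval_ofDigits_X, Nat.ofDigits_one, digitSum]
  have h_coeff (k : ℕ) : (D N * D M).coeff k =
      ∑ i ∈ range (k + 1), (N / p ^ i % p) * (M / p ^ (k - i) % p) := by
    rw [coeff_mul, Nat.sum_antidiagonal_eq_sum_range_succ_mk]
    simp only [D, coeff_ofDigits_X, Nat.getD_digits _ _ hp.two_le, Nat.cast_id]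
  rw [← h_eval_base, ← h_eval_one, eq_comm, digitSum_eval_eq_eval_one_iff hp.one_lt]
  simp only [h_coeff, Nat.le_sub_one_iff_lt hp.pos]
end

section
/- Let C = {i·p^j : i ∈ S, 0 ≤ j ≤ a-1} where S is a finite set of positive integers coprime to p, and ν ∈ S has maximal digit sum s_p(ν). If N = ν·w for some w < p^a with s_p(ν·w) = s_p(ν)·s_p(w), then M_C(N) = s_p(N)/s_p(ν). -/
/-- `IsRepr p a S N m` : `N` can be written as a sum of `m` coins (with repetition)
from the coin set `{i * p^j : i ∈ S, 0 ≤ j ≤ a-1}`. -/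
def IsRepr (p a : ℕ) (S : Finset ℕ) (N m : ℕ) : Prop :=
  ∃ t : ℕ → ℕ → ℕ,
    (∑ i ∈ S, ∑ j ∈ Finset.range a, t i j * (i * p ^ j)) = N ∧
    (∑ i ∈ S, ∑ j ∈ Finset.range a, t i j) = m

/-- The minimal number of coins from the coin set needed to sum to `N`. -/
noncomputable def MC (p a : ℕ) (S : Finset ℕ) (N : ℕ) : ℕ :=
  sInf {m | IsRepr p a S N m}


lemma ds_rec {p : ℕ} (hp : 1 < p) (n : ℕ) :
    digitSum p n = n % p + digitSum p (n / p) := by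
  rcases Nat.eq_zero_or_pos n with rfl | hn
  · simp [digitSum]
  · rw [digitSum, Nat.digits_def' hp hn, List.sum_cons]; rfl

lemma ds_lt {p : ℕ} (hp : 1 < p) {n : ℕ} (h : n < p) : digitSum p n = n := by
  rcases Nat.eq_zero_or_pos n with rfl | hn
  · simp [digitSum]
  · rw [ds_rec hp, Nat.mod_eq_of_lt h, Nat.div_eq_of_lt h]
    simp [digitSum]

lemma ds_pos {p : ℕ} (hp : 1 < p) : ∀ {n : ℕ}, n ≠ 0 → 0 < digitSum p n := by
  intro n
  induction n using Nat.strong_induction_on with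
  | _ n ih =>
    intro hn
    rw [ds_rec hp]
    rcases Nat.eq_zero_or_pos (n % p) with h | h
    · have hd : n / p ≠ 0 := by
        have hdvd : p ∣ n := Nat.dvd_of_mod_eq_zero h
        have hle : p ≤ n := Nat.le_of_dvd (Nat.pos_of_ne_zero hn) hdvd
        exact (Nat.div_pos hle (by omega)).ne' 
      have hlt : n / p < n := Nat.div_lt_self (Nat.pos_of_ne_zero hn) hp
      have := ih _ hlt hd
      omega
    · omega

lemma ds_subadd {p : ℕ} (hp : 1 < p) (x y : ℕ) :
    digitSum p (x + y) ≤ digitSum p x + digitSum p y := by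
  suffices H : ∀ n x y, x + y = n → digitSum p (x + y) ≤ digitSum p x + digitSum p y from
    H (x + y) x y rfl
  intro n
  induction n using Nat.strong_induction_on with
  | _ n ih =>
    intro x y hn
    subst hn
    by_cases hlt : x + y < p
    · rw [ds_lt hp hlt, ds_lt hp (by omega), ds_lt hp (by omega)]
    · push_neg at hlt
      have hp0 : 0 < p := by omega
      obtain ⟨qx, rx, hqx, hrx⟩ : ∃ q r, q = x / p ∧ r = x % p := ⟨_, _, rfl, rfl⟩
      obtain ⟨qy, ry, hqy, hry⟩ : ∃ q r, q = y / p ∧ r = y % p := ⟨_, _, rfl, rfl⟩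
      obtain ⟨c, hc⟩ : ∃ c, c = (rx + ry) / p := ⟨_, rfl⟩
      obtain ⟨r, hrr⟩ : ∃ r, r = (rx + ry) % p := ⟨_, rfl⟩
      have hx : p * qx + rx = x := by rw [hqx, hrx]; exact Nat.div_add_mod x p
      have hy : p * qy + ry = y := by rw [hqy, hry]; exact Nat.div_add_mod y p
      have hrx' : rx < p := by rw [hrx]; exact Nat.mod_lt _ hp0
      have hry' : ry < p := by rw [hry]; exact Nat.mod_lt _ hp0
      have hcm : p * c + r = rx + ry := by rw [hc, hrr]; exact Nat.div_add_mod _ _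
      have hr : r < p := by rw [hrr]; exact Nat.mod_lt _ hp0
      have hc1 : c < 2 := by
        rw [hc]
        exact (Nat.div_lt_iff_lt_mul hp0).mpr (by omega)
      have hpc : c ≤ p * c := Nat.le_mul_of_pos_left c hp0
      have hexp : p * (qx + qy + c) = p * qx + p * qy + p * c := by ring
      have heq : x + y = p * (qx + qy + c) + r := by omega
      have hdiv : (x + y) / p = qx + qy + c := by
        rw [heq, Nat.mul_add_div hp0, Nat.div_eq_of_lt hr, Nat.add_zero]
      have hmod : (x + y) % p = r := by
        rw [heq, Nat.mul_add_mod]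
        exact Nat.mod_eq_of_lt hr
      have e0 : digitSum p (x + y) = r + digitSum p (qx + qy + c) := by
        rw [ds_rec hp (x + y), hdiv, hmod]
      have e1 : digitSum p x = rx + digitSum p qx := by
        rw [ds_rec hp x, ← hrx, ← hqx]
      have e2 : digitSum p y = ry + digitSum p qy := by
        rw [ds_rec hp y, ← hry, ← hqy]
      have hm1 : qx + qy + c < x + y := hdiv ▸ Nat.div_lt_self (by omega) hp
      have h1 : digitSum p (qx + qy + c) ≤ digitSum p (qx + qy) + digitSum p c :=
        ih _ hm1 _ _ rfl
      have h2 : digitSum p (qx + qy) ≤ digitSum p qx + digitSum p qy := by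
        rcases Nat.eq_zero_or_pos (qx + qy) with h0 | h0
        · have hx0 : qx = 0 := by omega
          have hy0 : qy = 0 := by omega
          simp [hx0, hy0]
        · exact ih _ (lt_of_le_of_lt (Nat.le_add_right _ _) hm1) _ _ rfl
      have hdsc : digitSum p c = c := ds_lt hp (by omega)
      omega

lemma ds_sum_le {p : ℕ} (hp : 1 < p) {α : Type*} (s : Finset α) (f : α → ℕ) :
    digitSum p (∑ i ∈ s, f i) ≤ ∑ i ∈ s, digitSum p (f i) := by
  induction s using Finset.cons_induction with
  | empty => simp [digitSum]
  | cons i s hi ih =>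
    rw [Finset.sum_cons, Finset.sum_cons]
    exact le_trans (ds_subadd hp _ _) (by omega)

lemma ds_nsmul_le {p : ℕ} (hp : 1 < p) (k n : ℕ) :
    digitSum p (k * n) ≤ k * digitSum p n := by
  induction k with
  | zero => simp [digitSum]
  | succ k ih =>
    rw [Nat.succ_mul, Nat.succ_mul]
    exact le_trans (ds_subadd hp _ _) (by omega)

lemma ds_pow_mul {p : ℕ} (hp : 1 < p) (i j : ℕ) :
    digitSum p (i * p ^ j) = digitSum p i := by
  rcases Nat.eq_zero_or_pos i with rfl | hi
  · simp [digitSum]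
  · rw [mul_comm, digitSum, Nat.digits_base_pow_mul hp hi, List.sum_append]
    simp [digitSum]

lemma sum_digits_pow {p : ℕ} (hp : 1 < p) :
    ∀ a w, w < p ^ a →
      (∑ j ∈ Finset.range a, (Nat.digits p w).getD j 0 * p ^ j) = w ∧
      (∑ j ∈ Finset.range a, (Nat.digits p w).getD j 0) = digitSum p w := by
  intro a
  induction a with
  | zero =>
    intro w hw
    have : w = 0 := by simpa using hw
    subst this
    simp [digitSum]
  | succ a ih =>
    intro w hw
    rcases Nat.eq_zero_or_pos w with rfl | hw0
    · simp [digitSum]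
    · have hdig : Nat.digits p w = w % p :: Nat.digits p (w / p) := Nat.digits_def' hp hw0
      have hwp : w / p < p ^ a := by
        rw [Nat.div_lt_iff_lt_mul (by omega)]
        calc w < p ^ (a + 1) := hw
          _ = p ^ a * p := pow_succ p a
      obtain ⟨ih1, ih2⟩ := ih (w / p) hwp
      constructor
      · rw [Finset.sum_range_succ']
        simp only [hdig, List.getD_cons_succ, List.getD_cons_zero, pow_zero, mul_one, pow_succ]
        have hs : (∑ j ∈ Finset.range a, (Nat.digits p (w / p)).getD j 0 * (p ^ j * p))
            = (∑ j ∈ Finset.range a, (Nat.digits p (w / p)).getD j 0 * p ^ j) * p := by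
          rw [Finset.sum_mul]
          exact Finset.sum_congr rfl fun j _ => (mul_assoc _ _ _).symm
        rw [hs, ih1, mul_comm]
        have := Nat.div_add_mod w p
        omega
      · rw [Finset.sum_range_succ']
        simp only [hdig, List.getD_cons_succ, List.getD_cons_zero]
        rw [ih2]
        have : digitSum p w = w % p + digitSum p (w / p) := ds_rec hp w
        omega

lemma lowerBound {p a : ℕ} (hp : 1 < p) (S : Finset ℕ) (ν : ℕ)
    (hmax : ∀ i ∈ S, digitSum p i ≤ digitSum p ν)
    (N m : ℕ) (h : ∃ t : ℕ → ℕ → ℕ,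
      (∑ i ∈ S, ∑ j ∈ Finset.range a, t i j * (i * p ^ j)) = N ∧
      (∑ i ∈ S, ∑ j ∈ Finset.range a, t i j) = m) :
    digitSum p N ≤ digitSum p ν * m := by
  obtain ⟨t, h1, h2⟩ := h
  calc digitSum p N
      = digitSum p (∑ i ∈ S, ∑ j ∈ Finset.range a, t i j * (i * p ^ j)) := by rw [h1]
    _ ≤ ∑ i ∈ S, digitSum p (∑ j ∈ Finset.range a, t i j * (i * p ^ j)) := ds_sum_le hp _ _
    _ ≤ ∑ i ∈ S, ∑ j ∈ Finset.range a, digitSum p (t i j * (i * p ^ j)) :=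
        Finset.sum_le_sum fun i _ => ds_sum_le hp _ _
    _ ≤ ∑ i ∈ S, ∑ j ∈ Finset.range a, t i j * digitSum p (i * p ^ j) :=
        Finset.sum_le_sum fun i _ => Finset.sum_le_sum fun j _ => ds_nsmul_le hp _ _
    _ = ∑ i ∈ S, ∑ j ∈ Finset.range a, t i j * digitSum p i :=
        Finset.sum_congr rfl fun i _ => Finset.sum_congr rfl fun j _ => by
          rw [ds_pow_mul hp]
    _ ≤ ∑ i ∈ S, ∑ j ∈ Finset.range a, t i j * digitSum p ν :=
        Finset.sum_le_sum fun i hi => Finset.sum_le_sum fun j _ =>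
          Nat.mul_le_mul_left _ (hmax i hi)
    _ = digitSum p ν * m := by
        rw [← h2, Finset.mul_sum]
        refine Finset.sum_congr rfl fun i _ => ?_
        rw [Finset.mul_sum]
        exact Finset.sum_congr rfl fun j _ => mul_comm _ _

private theorem keyLemma_aux (p a : ℕ) (hp : p.Prime) (ha : 1 ≤ a)
    (S : Finset ℕ) (hS : ∀ i ∈ S, 0 < i ∧ Nat.Coprime i p)
    (ν : ℕ) (hν : ν ∈ S) (hmax : ∀ i ∈ S, digitSum p i ≤ digitSum p ν)
    (N w : ℕ) (hw : w < p ^ a) (hN : N = ν * w)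
    (hcf : digitSum p (ν * w) = digitSum p ν * digitSum p w) :
    digitSum p ν * (sInf {m | ∃ t : ℕ → ℕ → ℕ,
      (∑ i ∈ S, ∑ j ∈ Finset.range a, t i j * (i * p ^ j)) = N ∧
      (∑ i ∈ S, ∑ j ∈ Finset.range a, t i j) = m}) = digitSum p N := by
  have hp1 : 1 < p := hp.one_lt
  have hν0 : 0 < ν := (hS ν hν).1
  have hdν : 0 < digitSum p ν := ds_pos hp1 (by omega)
  set MCset := {m | ∃ t : ℕ → ℕ → ℕ,
      (∑ i ∈ S, ∑ j ∈ Finset.range a, t i j * (i * p ^ j)) = N ∧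
      (∑ i ∈ S, ∑ j ∈ Finset.range a, t i j) = m} with hMCset
  have hmem : digitSum p w ∈ MCset := by
    refine ⟨fun i j => if i = ν then (Nat.digits p w).getD j 0 else 0, ?_, ?_⟩
    · rw [Finset.sum_eq_single_of_mem ν hν (fun i _ hne => by simp [hne])]
      simp only [if_pos rfl]
      have h1 := (sum_digits_pow hp1 a w hw).1
      calc ∑ j ∈ Finset.range a, (Nat.digits p w).getD j 0 * (ν * p ^ j)
          = ν * ∑ j ∈ Finset.range a, (Nat.digits p w).getD j 0 * p ^ j := by
            rw [Finset.mul_sum]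
            exact Finset.sum_congr rfl fun j _ => by ring
        _ = ν * w := by rw [h1]
        _ = N := hN.symm
    · rw [Finset.sum_eq_single_of_mem ν hν (fun i _ hne => by simp [hne])]
      simp only [if_pos rfl]
      exact (sum_digits_pow hp1 a w hw).2
  have hub : sInf MCset ≤ digitSum p w := Nat.sInf_le hmem
  have hlb : digitSum p w ≤ sInf MCset := by
    have hmem' : sInf MCset ∈ MCset := Nat.sInf_mem ⟨_, hmem⟩
    have := lowerBound hp1 S ν hmax N (sInf MCset) hmem'
    rw [hN, hcf] at this
    exact Nat.le_of_mul_le_mul_left this hdν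
  have : sInf MCset = digitSum p w := le_antisymm hub hlb
  rw [this, hN, hcf]


theorem keyLemma_eq_of_carryFree_factorization (p a : ℕ) (hp : p.Prime) (ha : 1 ≤ a)
    (S : Finset ℕ) (hS : ∀ i ∈ S, 0 < i ∧ Nat.Coprime i p)
    (ν : ℕ) (hν : ν ∈ S) (hmax : ∀ i ∈ S, digitSum p i ≤ digitSum p ν)
    (N w : ℕ) (hw : w < p ^ a) (hN : N = ν * w)
    (hcf : digitSum p (ν * w) = digitSum p ν * digitSum p w) :
    digitSum p ν * MC p a S N = digitSum p N := by
  unfold MC IsRepr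
  exact keyLemma_aux p a hp ha S hS ν hν hmax N w hw hN hcf
end

section
/- Let ν be a positive integer coprime to p and suppose ν·w = (p^k - 1)·ℓ = (p^{k'} - 1)·ℓ' where ℓ < p^k, ℓ' < p^{k'}, and p does not divide w. Then k = k' and ℓ = ℓ'. -/
/-!
Suppose `k < k'` and put `g = gcd k k'`. Since `gcd (p^k - 1) (p^k' - 1) = p^g - 1`, the equation
`(p^k - 1) ℓ = (p^k' - 1) ℓ'` forces `(p^k' - 1) / (p^g - 1)` to divide `ℓ`. That quotient is at
least `p^(k' - g)`, and `g ∣ k' - k` gives `k' - g ≥ k`, so `ℓ ≥ p^k`: impossible. Hence `k = k'`,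
and then `ℓ = ℓ'` by cancelling `p^k - 1 ≠ 0`.
-/

theorem Nat.div_gcd_dvd_of_dvd_mul {a b c : ℕ} (hb : 0 < b) (h : b ∣ a * c) :
    b / a.gcd b ∣ c := by
  have hg : 0 < a.gcd b := Nat.gcd_pos_of_pos_right a hb
  have hdvd : b / a.gcd b ∣ a / a.gcd b * c := by
    rw [Nat.div_mul_right_comm (Nat.gcd_dvd_left a b)]
    exact Nat.div_dvd_div (Nat.gcd_dvd_right a b) h
  exact (Nat.coprime_div_gcd_div_gcd hg).symm.dvd_of_dvd_mul_left hdvd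

theorem Nat.pow_sub_le_pow_sub_one_div {a m n : ℕ} (ha : 1 < a) (hm : 0 < m) (hmn : m ≤ n) :
    a ^ (n - m) ≤ (a ^ n - 1) / (a ^ m - 1) := by
  have ham : 1 < a ^ m := Nat.one_lt_pow hm.ne' ha
  have hsplit : a ^ m * a ^ (n - m) = a ^ n := by rw [← pow_add, Nat.add_sub_cancel' hmn]
  have hpos : 1 ≤ a ^ (n - m) := Nat.one_le_pow _ _ (by omega)
  rw [Nat.le_div_iff_mul_le (by omega), mul_comm, Nat.sub_mul, one_mul, hsplit]
  omega

theorem le_of_pow_sub_one_mul_eq {a k k' ℓ ℓ' : ℕ} (ha : 1 < a) (hℓ : 0 < ℓ)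
    (hℓlt : ℓ < a ^ k) (h : (a ^ k - 1) * ℓ = (a ^ k' - 1) * ℓ') : k' ≤ k := by
  by_contra! hkk
  set g := k.gcd k'
  have hg : 0 < g := Nat.gcd_pos_of_pos_right k (by omega)
  have hkg : k ≤ k' - g := by
    have : g ≤ k' - k :=
      Nat.le_of_dvd (by omega) (Nat.dvd_sub (k.gcd_dvd_right k') (k.gcd_dvd_left k'))
    omega
  have hquot : (a ^ k' - 1) / (a ^ g - 1) ∣ ℓ := by
    rw [← Nat.pow_sub_one_gcd_pow_sub_one]
    refine Nat.div_gcd_dvd_of_dvd_mul ?_ ⟨ℓ', h⟩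
    have : 1 < a ^ k' := Nat.one_lt_pow (by omega) ha
    omega
  have : a ^ k ≤ ℓ :=
    calc a ^ k ≤ a ^ (k' - g) := Nat.pow_le_pow_right (by omega) hkg
      _ ≤ (a ^ k' - 1) / (a ^ g - 1) :=
        Nat.pow_sub_le_pow_sub_one_div ha hg (Nat.gcd_le_right (m := k) (n := k') (by omega))
      _ ≤ ℓ := Nat.le_of_dvd hℓ hquot
  omega

theorem minimal_factorization_determined_general (p : ℕ) (hp : p.Prime)
    (ν w k ℓ k' ℓ' : ℕ)
    (hℓ : 0 < ℓ) (hℓ' : 0 < ℓ')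
    (hℓlt : ℓ < p ^ k) (hℓ'lt : ℓ' < p ^ k')
    (h1 : ν * w = (p ^ k - 1) * ℓ) (h2 : ν * w = (p ^ k' - 1) * ℓ') :
    k = k' ∧ ℓ = ℓ' := by
  have h : (p ^ k - 1) * ℓ = (p ^ k' - 1) * ℓ' := h1.symm.trans h2
  have hkk : k = k' :=
    le_antisymm (le_of_pow_sub_one_mul_eq hp.one_lt hℓ' hℓ'lt h.symm)
      (le_of_pow_sub_one_mul_eq hp.one_lt hℓ hℓlt h)
  subst hkk
  exact ⟨rfl, Nat.eq_of_mul_eq_mul_left (by omega) h⟩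

theorem minimal_factorization_determined (p : ℕ) (hp : p.Prime)
    (ν w k ℓ k' ℓ' : ℕ) (hν : 0 < ν) (hco : Nat.Coprime ν p)
    (hw : 0 < w) (hk : 0 < k) (hℓ : 0 < ℓ) (hk' : 0 < k') (hℓ' : 0 < ℓ')
    (hℓlt : ℓ < p ^ k) (hℓ'lt : ℓ' < p ^ k')
    (hpw : ¬ p ∣ w)
    (h1 : ν * w = (p ^ k - 1) * ℓ) (h2 : ν * w = (p ^ k' - 1) * ℓ') :
    k = k' ∧ ℓ = ℓ' :=
  minimal_factorization_determined_general p hp ν w k ℓ k' ℓ' hℓ hℓ' hℓlt hℓ'lt h1 h2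
end

section
/- A positive integer ν with 1 < ν < p is p-symmetric if and only if ν divides p - 1. -/
/-- An integer `ν > 1` coprime to `p` is `p`-symmetric if there exist positive
integers `w`, `k`, `ℓ` with `ℓ < p^k` such that `ν * w = (p^k - 1) * ℓ` and the
base-`p` product `ν * w` is carry-free, i.e. `s_p(ν*w) = s_p(ν) * s_p(w)`. -/
def IsPSymmetric (p ν : ℕ) : Prop :=
  1 < ν ∧ Nat.Coprime ν p ∧
    ∃ w k ℓ : ℕ, 0 < w ∧ 0 < k ∧ 0 < ℓ ∧ ℓ < p ^ k ∧
      ν * w = (p ^ k - 1) * ℓ ∧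
      digitSum p (ν * w) = digitSum p ν * digitSum p w

lemma digitSum_of_lt_base {p n : ℕ} (hp : 1 < p) (h0 : 0 < n) (h : n < p) :
    digitSum p n = n := by
  unfold digitSum
  rw [Nat.digits_def' hp h0, Nat.mod_eq_of_lt h, Nat.div_eq_of_lt h, Nat.digits_zero]
  simp

/-- Carry-free multiplication by a single digit `ν` means all quotients split. -/
lemma carryFree_div (p ν w : ℕ) (hp : p.Prime) (hν : 0 < ν)
    (heq : digitSum p (ν * w) = ν * digitSum p w) :
    ∀ i : ℕ, (ν * w) / p ^ i = ν * (w / p ^ i) := by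
  haveI : Fact p.Prime := ⟨hp⟩
  have hp1 : 1 < p := hp.one_lt
  set b := Nat.log p (ν * w) + 1 with hb
  have hwle : w ≤ ν * w := Nat.le_mul_of_pos_left w hν
  have hb1 : Nat.log p (ν * w) < b := Nat.lt_succ_self _
  have hb2 : Nat.log p w < b := lt_of_le_of_lt (Nat.log_mono_right hwle) hb1
  have L1 : (p - 1) * ∑ i ∈ Finset.Ico 1 b, (ν * w) / p ^ i
      = ν * w - digitSum p (ν * w) := by
    rw [← padicValNat_factorial hb1, sub_one_mul_padicValNat_factorial]; rfl
  have L2 : (p - 1) * ∑ i ∈ Finset.Ico 1 b, w / p ^ i = w - digitSum p w := by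
    rw [← padicValNat_factorial hb2, sub_one_mul_padicValNat_factorial]; rfl
  have hterm : ∀ i ∈ Finset.Ico 1 b, ν * (w / p ^ i) ≤ (ν * w) / p ^ i := by
    intro i _
    rw [Nat.le_div_iff_mul_le (pow_pos hp.pos i), mul_assoc]
    exact Nat.mul_le_mul_left ν (Nat.div_mul_le_self w (p ^ i))
  have hsum : ∑ i ∈ Finset.Ico 1 b, ν * (w / p ^ i)
      = ∑ i ∈ Finset.Ico 1 b, (ν * w) / p ^ i := by
    have h1 : (p - 1) * ∑ i ∈ Finset.Ico 1 b, ν * (w / p ^ i)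
        = (p - 1) * ∑ i ∈ Finset.Ico 1 b, (ν * w) / p ^ i := by
      rw [L1, heq, ← Finset.mul_sum, mul_left_comm, L2, Nat.mul_sub]
    exact Nat.eq_of_mul_eq_mul_left (by omega) h1
  have hall : ∀ i ∈ Finset.Ico 1 b, ν * (w / p ^ i) = (ν * w) / p ^ i :=
    (Finset.sum_eq_sum_iff_of_le hterm).mp hsum
  intro i
  rcases Nat.eq_zero_or_pos i with hi | hi
  · subst hi; simp
  rcases lt_or_ge i b with hib | hib
  · exact (hall i (Finset.mem_Ico.mpr ⟨hi, hib⟩)).symm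
  · have hlt : ν * w < p ^ i := by
      calc ν * w < p ^ b := Nat.lt_pow_succ_log_self hp1 (ν * w)
      _ ≤ p ^ i := Nat.pow_le_pow_right hp.pos hib
    rw [Nat.div_eq_of_lt hlt, Nat.div_eq_of_lt (lt_of_le_of_lt hwle hlt), mul_zero]

theorem pSymmetric_lt_p_iff (p ν : ℕ) (hp : p.Prime) (h1 : 1 < ν) (h2 : ν < p) :
    IsPSymmetric p ν ↔ ν ∣ (p - 1) := by
  have hp1 : 1 < p := hp.one_lt
  have hν0 : 0 < ν := by omega
  have hdν : digitSum p ν = ν := digitSum_of_lt_base hp1 hν0 h2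
  constructor
  · rintro ⟨-, -, w, k, ℓ, hw, hk, hℓ, hℓlt, hmul, hds⟩
    rw [hdν] at hds
    have hdiv := carryFree_div p ν w hp hν0 hds
    set m := ν * w with hm
    -- every base-p digit of m is divisible by ν
    have hDvd : ∀ i : ℕ, ν ∣ (m / p ^ i) % p := by
      intro i
      have e1 : m / p ^ i = ν * (w / p ^ i) := hdiv i
      have e2 : m / p ^ (i + 1) = ν * (w / p ^ (i + 1)) := hdiv (i + 1)
      have e3 : m / p ^ (i + 1) = (m / p ^ i) / p := by
        rw [pow_succ, Nat.div_div_eq_div_mul]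
      have e4 : w / p ^ (i + 1) = (w / p ^ i) / p := by
        rw [pow_succ, Nat.div_div_eq_div_mul]
      have : (m / p ^ i) % p = m / p ^ i - p * (m / p ^ (i + 1)) := by
        rw [e3, Nat.mod_def]
      rw [this, e1, e2, mul_left_comm, ← Nat.mul_sub]
      exact Dvd.intro _ rfl
    have d0 : ν ∣ m % p := by
      have := hDvd 0
      simpa using this
    have dk : ν ∣ (m / p ^ k) % p := hDvd k
    -- compute m / p ^ k = ℓ - 1
    have hPle : ℓ ≤ p ^ k := le_of_lt hℓlt
    have hP1 : p ^ k ≤ p ^ k * ℓ := Nat.le_mul_of_pos_right _ hℓ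
    have hP2 : ℓ ≤ p ^ k * ℓ := Nat.le_mul_of_pos_left _ (pow_pos hp.pos k)
    have hsplit : m = (p ^ k - ℓ) + p ^ k * (ℓ - 1) := by
      rw [hmul, Nat.sub_mul, Nat.mul_sub, one_mul, mul_one]
      omega
    have hmdk : m / p ^ k = ℓ - 1 := by
      rw [hsplit, Nat.add_mul_div_left _ _ (pow_pos hp.pos k),
        Nat.div_eq_of_lt (by omega), zero_add]
    rw [hmdk] at dk
    -- p divides m + ℓ
    have hpml : p ∣ m + ℓ := by
      have : m + ℓ = p ^ k * ℓ := by
        rw [hmul, Nat.sub_mul, one_mul]; omega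
      rw [this]
      exact Dvd.dvd.mul_right (dvd_pow_self p (by omega)) ℓ
    -- hence m % p + (ℓ-1) % p = p - 1
    set r := (ℓ - 1) % p with hr
    have hcong : (m % p + r + 1) ≡ 0 [MOD p] := by
      calc m % p + r + 1 ≡ m + (ℓ - 1) + 1 [MOD p] :=
            Nat.ModEq.add ((Nat.mod_modEq m p).add (Nat.mod_modEq (ℓ - 1) p)) rfl
        _ = m + ℓ := by omega
        _ ≡ 0 [MOD p] := Nat.modEq_zero_iff_dvd.mpr hpml
    obtain ⟨t, ht⟩ := Nat.modEq_zero_iff_dvd.mp hcong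
    have hmp : m % p < p := Nat.mod_lt _ hp.pos
    have hrp : r < p := Nat.mod_lt _ hp.pos
    have ht1 : t = 1 := by
      rcases t with _ | _ | t
      · omega
      · rfl
      · exfalso
        have h2p : p * 2 ≤ p * (t + 1 + 1) := Nat.mul_le_mul_left p (by omega)
        omega
    subst ht1
    rw [mul_one] at ht
    have hfin : m % p + r = p - 1 := by omega
    have : ν ∣ m % p + r := Nat.dvd_add d0 dk
    rwa [hfin] at this
  · rintro ⟨c, hc⟩
    have hc0 : 0 < c := by
      rcases Nat.eq_zero_or_pos c with h | h
      · subst h; simp at hc; omega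
      · exact h
    have hcp : c < p := by
      have : c ≤ ν * c := Nat.le_mul_of_pos_left c hν0
      omega
    refine ⟨h1, ?_, c, 1, 1, hc0, one_pos, one_pos, by simpa using hp1, ?_, ?_⟩
    · have hnd : ¬ p ∣ ν := fun h => absurd (Nat.le_of_dvd hν0 h) (not_le.mpr h2)
      exact ((hp.coprime_iff_not_dvd).mpr hnd).symm
    · rw [pow_one, mul_one, ← hc]
    · have hm : ν * c = p - 1 := hc.symm
      rw [hm, hdν, digitSum_of_lt_base hp1 (by omega) (by omega),
        digitSum_of_lt_base hp1 hc0 hcp, hm]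
end

section
/- Let n be a positive integer dividing p - 1, and let ν be a positive integer coprime to p with s_p(ν) = n. Then ν is p-symmetric: there exist positive integers w, k, ℓ with ℓ < p^k, ν·w = (p^k - 1)·ℓ, and s_p(ν·w) = s_p(ν)·s_p(w). Concretely, one may take w = ((p-1)/n)·(1 + p + ... + p^{k-1}) for suitable k. -/
/-! The witness is `w = m * (1 + p + ⋯ + p^(k-1))` with `m = (p-1)/n`, whose digits are `k` copies
of `m`, and `k = ν`. Since `ν ≡ s_p(ν) = n [MOD p-1]`, `p - 1` divides `ν m`, say `ν m = (p-1) ℓ`, so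
`ν w = (p^k - 1) ℓ` with `0 < ℓ ≤ ν < p^k`. Writing `(p^k - 1) ℓ = (p^k - ℓ) + p^k (ℓ - 1)`, the
digits of `p^k - ℓ = p^k - 1 - (ℓ - 1)` are the `(p-1)`-complements of those of `ℓ - 1`, so
`s_p(ν w) = k (p-1) = n · k m = s_p(ν) s_p(w)`. -/

variable {p : ℕ}

lemma modEq_digitSum (hp : 1 ≤ p) (a : ℕ) : a ≡ digitSum p a [MOD p - 1] := by
  simpa [digitSum, Nat.ofDigits_one, Nat.ofDigits_digits] using
    Nat.ofDigits_modEq' p 1 (p - 1) (Nat.modEq_sub hp) (Nat.digits p a)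

lemma digitSum_add_base_mul (hp : 1 < p) {r : ℕ} (hr : r < p) (x : ℕ) :
    digitSum p (r + p * x) = r + digitSum p x := by
  by_cases h : r = 0 ∧ x = 0
  · simp [h.1, h.2, digitSum]
  · rw [digitSum, Nat.digits_add p hp r x hr (by tauto), List.sum_cons, digitSum]

lemma digitSum_add_base_pow_mul (hp : 1 < p) {k c : ℕ} (hc : c < p ^ k) (b : ℕ) :
    digitSum p (c + p ^ k * b) = digitSum p c + digitSum p b := by
  rcases b.eq_zero_or_pos with rfl | hb
  · simp [digitSum]
  obtain ⟨j, rfl⟩ := Nat.exists_eq_add_of_le ((Nat.digits_length_le_iff hp c).2 hc)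
  simp [digitSum, ← Nat.digits_append_zeroes_append_digits hp hb]

lemma digitSum_mul_geom_sum (hp : 1 < p) {m : ℕ} (hm : m < p) (k : ℕ) :
    digitSum p (m * ∑ i ∈ Finset.range k, p ^ i) = k * m := by
  induction k with
  | zero => simp [digitSum]
  | succ k ih =>
    rw [geom_sum_succ, mul_add, mul_one, add_comm, mul_left_comm, digitSum_add_base_mul hp hm, ih]
    ring

lemma digitSum_add_digitSum_sub (hp : 1 < p) {k a : ℕ} (ha : a < p ^ k) :
    digitSum p a + digitSum p (p ^ k - 1 - a) = k * (p - 1) := by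
  induction k generalizing a with
  | zero =>
    obtain rfl : a = 0 := by simpa using ha
    simp [digitSum]
  | succ k ih =>
    have hq : a / p < p ^ k := Nat.div_lt_of_lt_mul (by rwa [← pow_succ'])
    have hr : a % p < p := Nat.mod_lt a (by omega)
    have hsplit := digitSum_add_base_mul hp hr (a / p)
    rw [Nat.mod_add_div] at hsplit
    have hcompl : p ^ (k + 1) - 1 - a = (p - 1 - a % p) + p * (p ^ k - 1 - a / p) := by
      obtain ⟨d, hd⟩ := Nat.exists_eq_add_of_lt hq
      have := Nat.mod_add_div a p
      rw [pow_succ', hd, show a / p + d + 1 - 1 - a / p = d by omega, mul_add, mul_add]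
      generalize p * (a / p) = x at *
      omega
    rw [hcompl, digitSum_add_base_mul hp (by omega), hsplit, add_mul, one_mul]
    have := ih hq
    omega

lemma digitSum_base_pow_sub_one_mul (hp : 1 < p) {k ℓ : ℕ} (hℓ₀ : 0 < ℓ) (hℓ : ℓ ≤ p ^ k) :
    digitSum p ((p ^ k - 1) * ℓ) = k * (p - 1) := by
  have hsplit : (p ^ k - 1) * ℓ = (p ^ k - 1 - (ℓ - 1)) + p ^ k * (ℓ - 1) := by
    obtain ⟨j, rfl⟩ := Nat.exists_eq_add_of_le' hℓ₀
    obtain ⟨d, hd⟩ := Nat.exists_eq_add_of_le hℓ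
    rw [hd, show j + 1 + d - 1 = j + d by omega, show j + d - (j + 1 - 1) = d by omega,
      Nat.add_sub_cancel]
    ring
  rw [hsplit, digitSum_add_base_pow_mul hp (by omega), add_comm,
    digitSum_add_digitSum_sub hp (by omega)]

lemma sub_one_dvd_mul_div_digitSum (hp : 1 ≤ p) {a : ℕ} (ha : digitSum p a ∣ p - 1) :
    p - 1 ∣ a * ((p - 1) / digitSum p a) := by
  have h := (modEq_digitSum hp a).mul_right ((p - 1) / digitSum p a)
  rw [Nat.mul_div_cancel' ha] at h
  exact (h.dvd_iff dvd_rfl).2 dvd_rfl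

theorem pSymmetric_of_digitSum_dvd_general (p n ν : ℕ) (hp : p.Prime)
    (hdvd : n ∣ p - 1)
    (hν : 0 < ν) (hs : digitSum p ν = n) :
    ∃ k ℓ : ℕ, 0 < k ∧ 0 < ℓ ∧ ℓ < p ^ k ∧
      ν * (((p - 1) / n) * ∑ i ∈ Finset.range k, p ^ i) = (p ^ k - 1) * ℓ ∧
      digitSum p (ν * (((p - 1) / n) * ∑ i ∈ Finset.range k, p ^ i)) =
        digitSum p ν * digitSum p (((p - 1) / n) * ∑ i ∈ Finset.range k, p ^ i) := by
  have hp1 := hp.one_lt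
  subst hs
  set m := (p - 1) / digitSum p ν
  have hm : digitSum p ν * m = p - 1 := Nat.mul_div_cancel' hdvd
  have hm₀ : 0 < m := Nat.pos_of_ne_zero fun h => by rw [h] at hm; omega
  have hmp : m ≤ p - 1 := Nat.div_le_self _ _
  obtain ⟨ℓ, hℓ⟩ := sub_one_dvd_mul_div_digitSum hp1.le hdvd
  have hℓ₀ : 0 < ℓ := Nat.pos_of_mul_pos_left (hℓ ▸ Nat.mul_pos hν hm₀)
  have hℓν : ℓ ≤ ν := by
    refine Nat.le_of_mul_le_mul_left ?_ (by omega : 0 < p - 1)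
    rw [← hℓ, mul_comm (p - 1)]
    exact Nat.mul_le_mul_left ν hmp
  have hw : ν * (m * ∑ i ∈ Finset.range ν, p ^ i) = (p ^ ν - 1) * ℓ := by
    rw [← mul_assoc, hℓ, ← geom_sum_mul_of_one_le hp1.le]
    ring
  have hℓk : ℓ < p ^ ν := hℓν.trans_lt (Nat.lt_pow_self hp1)
  refine ⟨ν, ℓ, hν, hℓ₀, hℓk, hw, ?_⟩
  rw [hw, digitSum_base_pow_sub_one_mul hp1 hℓ₀ hℓk.le, digitSum_mul_geom_sum hp1 (by omega), ← hm]
  ring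

theorem pSymmetric_of_digitSum_dvd (p n ν : ℕ) (hp : p.Prime)
    (hn : 0 < n) (hdvd : n ∣ p - 1)
    (hν : 0 < ν) (hco : Nat.Coprime ν p) (hs : digitSum p ν = n) :
    ∃ k ℓ : ℕ, 0 < k ∧ 0 < ℓ ∧ ℓ < p ^ k ∧
      ν * (((p - 1) / n) * ∑ i ∈ Finset.range k, p ^ i) = (p ^ k - 1) * ℓ ∧
      digitSum p (ν * (((p - 1) / n) * ∑ i ∈ Finset.range k, p ^ i)) =
        digitSum p ν * digitSum p (((p - 1) / n) * ∑ i ∈ Finset.range k, p ^ i) :=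
  pSymmetric_of_digitSum_dvd_general p n ν hp hdvd hν hs
end

section
/- Let C = {i·p^j : i ∈ S, 0 ≤ j ≤ a-1} with S a finite set of positive integers coprime to p, and suppose ν = p^k - 1 ∈ S is the unique element of maximal base-p digit sum, with k dividing a. Then M_C((p^a - 1)·ℓ) = a(p-1)/s_p(ν) = a/k if and only if ℓ ∈ {1, p, p^2, ..., p^{k-1}}. -/
open Finset

section DigitSum

variable {b : ℕ}

theorem digitSum_eq_mod_add_digitSum_div (hb : 2 ≤ b) (n : ℕ) :
    digitSum b n = n % b + digitSum b (n / b) := by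
  rcases n.eq_zero_or_pos with rfl | hn
  · simp [digitSum]
  · simp [digitSum, Nat.digits_def' hb hn]

theorem digitSum_add_pow_mul (hb : 2 ≤ b) {r a : ℕ} (hr : r < b ^ a) (q : ℕ) :
    digitSum b (r + b ^ a * q) = digitSum b r + digitSum b q := by
  rcases q.eq_zero_or_pos with rfl | hq
  · simp [digitSum]
  have hlen : (Nat.digits b r).length ≤ a := (Nat.digits_length_le_iff hb r).2 hr
  rw [digitSum, ← Nat.add_sub_cancel' hlen, ← Nat.digits_append_zeroes_append_digits hb hq]
  simp [digitSum]

theorem digitSum_pow_mul (hb : 2 ≤ b) (a n : ℕ) : digitSum b (b ^ a * n) = digitSum b n := by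
  simpa [digitSum] using digitSum_add_pow_mul hb (pow_pos (by omega : 0 < b) a) n

theorem Nat.digits_pow_sub_one (hb : 2 ≤ b) (k : ℕ) :
    Nat.digits b (b ^ k - 1) = List.replicate k (b - 1) := by
  induction k with
  | zero => simp
  | succ k ih =>
    have hsplit : b ^ (k + 1) - 1 = (b - 1) + b * (b ^ k - 1) := by
      have := Nat.one_le_pow k b (by omega)
      zify [this, Nat.one_le_pow (k + 1) b (by omega), (by omega : 1 ≤ b)]
      ring
    rw [hsplit, Nat.digits_add b hb _ _ (by omega) (Or.inl (by omega)), ih, List.replicate_succ]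

theorem digitSum_pow_sub_one (hb : 2 ≤ b) (k : ℕ) : digitSum b (b ^ k - 1) = k * (b - 1) := by
  simp [digitSum, Nat.digits_pow_sub_one hb]

theorem pow_sub_one_mul_pow_div_pow_mod {k j w : ℕ} (hb : 2 ≤ b) (hjw : j ≤ w) (hwk : w < j + k) :
    (b ^ k - 1) * b ^ j / b ^ w % b = b - 1 := by
  obtain ⟨d, rfl⟩ := Nat.exists_eq_add_of_le hjw
  rw [pow_add, mul_comm (b ^ j), Nat.mul_div_mul_right _ _ (pow_pos (by omega) j),
    ← Nat.getD_digits _ _ hb, Nat.digits_pow_sub_one hb, List.getD_replicate _ (by omega)]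

theorem digitSum_add_le_s19 (hb : 2 ≤ b) (x y : ℕ) :
    digitSum b (x + y) ≤ digitSum b x + digitSum b y := by
  induction hn : x + y using Nat.strong_induction_on generalizing x y with
  | _ n ih =>
  subst hn
  rcases (x + y).eq_zero_or_pos with h0 | hpos
  · obtain ⟨rfl, rfl⟩ : x = 0 ∧ y = 0 := by omega
    simp
  have hdiv : (x + y) / b < x + y := Nat.div_lt_self hpos (by omega)
  have hle : x / b + y / b ≤ (x + y) / b := Nat.div_add_div_le_add_div
  have hrec := ih _ (hle.trans_lt hdiv) (x / b) (y / b) rfl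
  rw [digitSum_eq_mod_add_digitSum_div hb (x + y), digitSum_eq_mod_add_digitSum_div hb x,
    digitSum_eq_mod_add_digitSum_div hb y]
  by_cases hc : x % b + y % b < b
  · rw [Nat.add_mod_of_add_mod_lt hc, Nat.add_div_eq_of_add_mod_lt hc]
    omega
  · have hmod := Nat.add_mod_add_of_le_add_mod (not_lt.1 hc)
    have hcarry := Nat.add_div_eq_of_le_mod_add_mod (not_lt.1 hc) (by omega)
    have hone := ih _ (hcarry ▸ hdiv) (x / b + y / b) 1 hcarry.symm
    have : digitSum b 1 = 1 := by simp [digitSum, Nat.digits_of_lt b 1 one_ne_zero hb]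
    omega

theorem mod_add_mod_lt_of_digitSum_add_eq (hb : 2 ≤ b) {x y : ℕ}
    (h : digitSum b (x + y) = digitSum b x + digitSum b y) :
    x % b + y % b < b ∧ digitSum b (x / b + y / b) = digitSum b (x / b) + digitSum b (y / b) := by
  rw [digitSum_eq_mod_add_digitSum_div hb (x + y), digitSum_eq_mod_add_digitSum_div hb x,
    digitSum_eq_mod_add_digitSum_div hb y] at h
  have hle := digitSum_add_le_s19 hb (x / b) (y / b)
  by_cases hc : x % b + y % b < b
  · rw [Nat.add_mod_of_add_mod_lt hc, Nat.add_div_eq_of_add_mod_lt hc] at h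
    exact ⟨hc, by omega⟩
  · have hmod := Nat.add_mod_add_of_le_add_mod (not_lt.1 hc)
    rw [Nat.add_div_eq_of_le_mod_add_mod (not_lt.1 hc) (by omega)] at h
    have hone := digitSum_add_le_s19 hb (x / b + y / b) 1
    have : digitSum b 1 = 1 := by simp [digitSum, Nat.digits_of_lt b 1 one_ne_zero hb]
    omega

theorem div_pow_mod_add_of_digitSum_add_eq (hb : 2 ≤ b) {x y : ℕ}
    (h : digitSum b (x + y) = digitSum b x + digitSum b y) (w : ℕ) :
    (x + y) / b ^ w % b = x / b ^ w % b + y / b ^ w % b := by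
  induction w generalizing x y with
  | zero => simpa using Nat.add_mod_of_add_mod_lt (mod_add_mod_lt_of_digitSum_add_eq hb h).1
  | succ w ih =>
    obtain ⟨hc, hdiv⟩ := mod_add_mod_lt_of_digitSum_add_eq hb h
    simp only [pow_succ', ← Nat.div_div_eq_div_mul, Nat.add_div_eq_of_add_mod_lt hc]
    exact ih hdiv

theorem digitSum_sum_le (hb : 2 ≤ b) {ι : Type*} (u : Finset ι) (f : ι → ℕ) :
    digitSum b (∑ i ∈ u, f i) ≤ ∑ i ∈ u, digitSum b (f i) := by
  induction u using Finset.cons_induction with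
  | empty => simp [digitSum]
  | cons i u hi ih =>
    rw [sum_cons, sum_cons]
    exact (digitSum_add_le_s19 hb _ _).trans (by omega)

theorem div_pow_mod_sum_of_digitSum_sum_eq (hb : 2 ≤ b) {ι : Type*} {u : Finset ι} {f : ι → ℕ}
    (h : digitSum b (∑ i ∈ u, f i) = ∑ i ∈ u, digitSum b (f i)) (w : ℕ) :
    (∑ i ∈ u, f i) / b ^ w % b = ∑ i ∈ u, f i / b ^ w % b := by
  induction u using Finset.cons_induction with
  | empty => simp
  | cons i u hi ih =>
    simp only [sum_cons] at h ⊢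
    have hhead := digitSum_add_le_s19 hb (f i) (∑ j ∈ u, f j)
    have htail := digitSum_sum_le hb u f
    rw [div_pow_mod_add_of_digitSum_add_eq hb (by omega) w, ih (by omega)]

theorem Finset.sum_mul_eq_sum_sigma_range {ι : Type*} (u : Finset ι) (c f : ι → ℕ) :
    ∑ i ∈ u, c i * f i = ∑ x ∈ u.sigma fun i => range (c i), f x.1 := by
  simp [sum_sigma]

theorem digitSum_sum_mul_le (hb : 2 ≤ b) {ι : Type*} (u : Finset ι) (c f : ι → ℕ) :
    digitSum b (∑ i ∈ u, c i * f i) ≤ ∑ i ∈ u, c i * digitSum b (f i) := by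
  simpa only [sum_mul_eq_sum_sigma_range] using digitSum_sum_le hb _ fun x : Σ _ : ι, ℕ => f x.1

theorem div_pow_mod_sum_mul_of_digitSum_eq (hb : 2 ≤ b) {ι : Type*} {u : Finset ι} {c f : ι → ℕ}
    (h : digitSum b (∑ i ∈ u, c i * f i) = ∑ i ∈ u, c i * digitSum b (f i)) (w : ℕ) :
    (∑ i ∈ u, c i * f i) / b ^ w % b = ∑ i ∈ u, c i * (f i / b ^ w % b) := by
  simp only [sum_mul_eq_sum_sigma_range] at h ⊢
  exact div_pow_mod_sum_of_digitSum_sum_eq hb h w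

theorem mul_sub_one_le_digitSum_of_dvd (hb : 2 ≤ b) {a : ℕ} (ha : 0 < a) :
    ∀ N, 0 < N → b ^ a - 1 ∣ N → a * (b - 1) ≤ digitSum b N := by
  have hba : 2 ≤ b ^ a := hb.trans (Nat.le_self_pow ha.ne' b)
  intro N
  induction N using Nat.strong_induction_on with
  | _ N ih =>
  intro hN hdvd
  rcases lt_or_ge N (b ^ a) with hlt | hge
  · obtain rfl : N = b ^ a - 1 := by have := Nat.le_of_dvd hN hdvd; omega
    rw [digitSum_pow_sub_one hb]
  set q := N / b ^ a
  set r := N % b ^ a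
  have hNqr : r + b ^ a * q = N := Nat.mod_add_div N (b ^ a)
  have hq : 0 < q := Nat.div_pos hge (by omega)
  have hfold : b ^ a * q = q + (b ^ a - 1) * q := by
    rw [Nat.sub_one_mul, Nat.add_sub_cancel' (Nat.le_mul_of_pos_left q (by omega))]
  have hdvd' : b ^ a - 1 ∣ r + q := by
    rw [← hNqr, hfold, ← add_assoc] at hdvd
    exact (Nat.dvd_add_left (dvd_mul_right _ q)).1 hdvd
  have hlt : r + q < N := by
    have : q < b ^ a * q := lt_mul_left hq (by omega)
    linarith
  calc a * (b - 1) ≤ digitSum b (r + q) := ih _ hlt (hq.trans_le (Nat.le_add_left q r)) hdvd'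
    _ ≤ digitSum b r + digitSum b q := digitSum_add_le_s19 hb r q
    _ = digitSum b N := by rw [← hNqr, digitSum_add_pow_mul hb (Nat.mod_lt _ (by omega))]

end DigitSum

theorem Finset.sum_range_mul_eq_sum_sum {M : Type*} [AddCommMonoid M] (f : ℕ → M) (k q : ℕ) :
    ∑ j ∈ range (k * q), f j = ∑ m ∈ range q, ∑ s ∈ range k, f (k * m + s) := by
  induction q with
  | zero => simp
  | succ q ih => rw [mul_add, mul_one, sum_range_add, ih, sum_range_succ]

theorem Finset.sum_mul_eq_zero_or_exists_of_sum_le_one {ι : Type*} {s : Finset ι} {T : ι → ℕ}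
    (g : ι → ℕ) (h : ∑ i ∈ s, T i ≤ 1) :
    ∑ i ∈ s, T i * g i = 0 ∨ ∃ i ∈ s, ∑ i ∈ s, T i * g i = g i := by
  classical
  by_cases hz : ∀ i ∈ s, T i = 0
  · exact Or.inl (sum_eq_zero fun i hi => by rw [hz i hi, zero_mul])
  push Not at hz
  obtain ⟨i, hi, hTi⟩ := hz
  have hsplit := add_sum_erase s T hi
  have hrest : ∀ j ∈ s.erase i, T j = 0 := sum_eq_zero_iff.1 (by omega)
  refine Or.inr ⟨i, hi, ?_⟩
  rw [sum_eq_single_of_mem i hi fun j hj hne => by rw [hrest j (mem_erase.2 ⟨hne, hj⟩), zero_mul],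
    show T i = 1 by omega, one_mul]

theorem sum_pow_mul_modEq {B q : ℕ} (hq : 0 < q) (f : ℕ → ℕ) :
    ∑ m ∈ range q, B ^ m * f m ≡ f 0 [MOD B] := by
  obtain ⟨q, rfl⟩ := Nat.exists_eq_add_of_lt hq
  rw [zero_add, sum_range_succ']
  simp only [pow_succ', mul_assoc, ← mul_sum, pow_zero, one_mul]
  simp [Nat.ModEq]

theorem eq_of_sum_pow_mul_eq_geom_sum_mul {B c q ℓ : ℕ} {Y : ℕ → ℕ} (hq : 0 < q) (hcB : c < B)
    (hY : ∀ m < q, Y m ≤ c) (h : ∑ m ∈ range q, B ^ m * Y m = (∑ m ∈ range q, B ^ m) * ℓ) :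
    ℓ = Y 0 := by
  have hR : 0 < ∑ m ∈ range q, B ^ m :=
    sum_pos (fun m _ => pow_pos (by omega) m) (nonempty_range_iff.2 hq.ne')
  have hℓc : ℓ ≤ c := by
    refine Nat.le_of_mul_le_mul_left ?_ hR
    calc (∑ m ∈ range q, B ^ m) * ℓ = ∑ m ∈ range q, B ^ m * Y m := h.symm
      _ ≤ ∑ m ∈ range q, B ^ m * c :=
        sum_le_sum fun m hm => Nat.mul_le_mul_left _ (hY m (mem_range.1 hm))
      _ = (∑ m ∈ range q, B ^ m) * c := by rw [sum_mul]
  have hmod : ℓ ≡ Y 0 [MOD B] := by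
    have hℓ := sum_pow_mul_modEq hq (B := B) fun _ => ℓ
    rw [← sum_mul, ← h] at hℓ
    exact hℓ.symm.trans (sum_pow_mul_modEq hq Y)
  exact hmod.eq_of_lt_of_lt (by omega) ((hY 0 hq).trans_lt hcB)

theorem pow_mul_sub_one_eq_mul_geom_sum {p : ℕ} (hp : 0 < p) (k q : ℕ) :
    p ^ (k * q) - 1 = (p ^ k - 1) * ∑ m ∈ range q, (p ^ k) ^ m := by
  rw [pow_mul, ← geom_sum_mul_of_one_le (Nat.one_le_pow _ _ hp), mul_comm]

namespace IsRepr

variable {p a : ℕ} {S : Finset ℕ}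

theorem zero : IsRepr p a S 0 0 := ⟨fun _ _ => 0, by simp, by simp⟩

theorem add {N₁ N₂ m₁ m₂ : ℕ} (h₁ : IsRepr p a S N₁ m₁) (h₂ : IsRepr p a S N₂ m₂) :
    IsRepr p a S (N₁ + N₂) (m₁ + m₂) := by
  obtain ⟨t₁, hN₁, hm₁⟩ := h₁
  obtain ⟨t₂, hN₂, hm₂⟩ := h₂
  refine ⟨t₁ + t₂, ?_, ?_⟩ <;>
    simp only [Pi.add_apply, add_mul, sum_add_distrib, hN₁, hN₂, hm₁, hm₂]

theorem single {i j : ℕ} (hi : i ∈ S) (hj : j < a) : IsRepr p a S (i * p ^ j) 1 := by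
  refine ⟨fun i' j' => if (i', j') = (i, j) then 1 else 0, ?_, ?_⟩ <;>
    rw [← sum_product'] <;> simp [ite_mul, hi, hj]

theorem sum {ι : Type*} (u : Finset ι) {N m : ι → ℕ} (h : ∀ x ∈ u, IsRepr p a S (N x) (m x)) :
    IsRepr p a S (∑ x ∈ u, N x) (∑ x ∈ u, m x) := by
  induction u using Finset.cons_induction with
  | empty => simpa using zero
  | cons x u hx ih =>
    simp only [sum_cons]
    exact (h x (mem_cons_self x u)).add (ih fun y hy => h y (mem_cons_of_mem hy))

theorem digitSum_le (hp : 2 ≤ p) {B N m : ℕ} (hB : ∀ i ∈ S, digitSum p i ≤ B)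
    (h : IsRepr p a S N m) : digitSum p N ≤ m * B := by
  obtain ⟨t, rfl, rfl⟩ := h
  simp only [← sum_product', sum_mul]
  refine (digitSum_sum_mul_le hp _ _ _).trans (sum_le_sum fun x hx => ?_)
  rw [mul_comm x.1, digitSum_pow_mul hp]
  exact Nat.mul_le_mul_left _ (hB x.1 (mem_product.1 hx).1)

theorem exists_digitwise_of_le_digitSum (hp : 2 ≤ p) {ν N m : ℕ} (hν : ν ∈ S)
    (hmax : ∀ i ∈ S, i ≠ ν → digitSum p i < digitSum p ν)
    (hN : m * digitSum p ν ≤ digitSum p N) (h : IsRepr p a S N m) :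
    ∃ T : ℕ → ℕ, ∑ j ∈ range a, T j * (ν * p ^ j) = N ∧
      ∀ w, ∑ j ∈ range a, T j * (ν * p ^ j / p ^ w % p) = N / p ^ w % p := by
  obtain ⟨t, hNt, hmt⟩ := h
  rw [← sum_product'] at hNt hmt
  set P := S ×ˢ range a with hP
  have hcoin : ∀ x ∈ P, t x.1 x.2 * digitSum p (x.1 * p ^ x.2) ≤ t x.1 x.2 * digitSum p ν := by
    intro x hx
    rw [mul_comm x.1, digitSum_pow_mul hp]
    rcases eq_or_ne x.1 ν with hx' | hne
    · rw [hx']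
    · exact Nat.mul_le_mul_left _ (hmax _ (mem_product.1 hx).1 hne).le
  have hle := digitSum_sum_mul_le hp P (fun x => t x.1 x.2) (fun x => x.1 * p ^ x.2)
  have hcoins := sum_le_sum hcoin
  have htotal : ∑ x ∈ P, t x.1 x.2 * digitSum p ν = m * digitSum p ν := by rw [← sum_mul, hmt]
  rw [hNt] at hle
  have hsat := (sum_eq_sum_iff_of_le hcoin).1 (by omega)
  have hzero : ∀ x ∈ P, x.1 ≠ ν → t x.1 x.2 = 0 := by
    intro x hx hne
    by_contra h0
    have hlt := (Nat.mul_lt_mul_left (Nat.pos_of_ne_zero h0)).2 (hmax _ (mem_product.1 hx).1 hne)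
    rw [← digitSum_pow_mul hp x.2, mul_comm _ x.1] at hlt
    exact hlt.ne (hsat x hx)
  have hrestrict : ∀ g : ℕ → ℕ → ℕ,
      ∑ x ∈ P, t x.1 x.2 * g x.1 x.2 = ∑ j ∈ range a, t ν j * g ν j := by
    intro g
    rw [hP, sum_product' (f := fun i j => t i j * g i j),
      sum_eq_single_of_mem ν hν fun i hi hne => sum_eq_zero fun j hj => ?_]
    rw [hzero (i, j) (mem_product.2 ⟨hi, hj⟩) hne, zero_mul]
  refine ⟨t ν, (hrestrict fun i j => i * p ^ j).symm.trans hNt, fun w => ?_⟩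
  rw [← hrestrict fun i j => i * p ^ j / p ^ w % p, ← hNt]
  exact (div_pow_mod_sum_mul_of_digitSum_eq hp (by rw [hNt]; omega) w).symm

end IsRepr

theorem isRepr_mul_sum_pow {p a k q r i : ℕ} {S : Finset ℕ} (hi : i ∈ S) (hr : r < k)
    (hkq : k * q ≤ a) : IsRepr p a S (i * (∑ m ∈ range q, (p ^ k) ^ m) * p ^ r) q := by
  have hexp : ∀ m ∈ range q, k * m + r < a := fun m hm => by
    have := Nat.mul_le_mul_left k (mem_range.1 hm)
    rw [Nat.mul_succ] at this
    omega
  simpa [mul_sum, sum_mul, pow_add, pow_mul, mul_assoc] using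
    IsRepr.sum (range q) fun m hm => IsRepr.single (p := p) hi (hexp m hm)

theorem sum_range_le_one_of_digitwise {p k q N m : ℕ} {T : ℕ → ℕ} (hp : 2 ≤ p)
    (hdigit : ∀ w, ∑ j ∈ range (k * q), T j * ((p ^ k - 1) * p ^ j / p ^ w % p) = N / p ^ w % p)
    (hm : m < q) : ∑ s ∈ range k, T (k * m + s) ≤ 1 := by
  have hw := hdigit (k * m + (k - 1))
  rw [sum_range_mul_eq_sum_sum] at hw
  have hlt := Nat.mod_lt (N / p ^ (k * m + (k - 1))) (by omega : 0 < p)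
  refine Nat.le_of_mul_le_mul_right (c := p - 1) ?_ (by omega)
  calc (∑ s ∈ range k, T (k * m + s)) * (p - 1)
      = ∑ s ∈ range k, T (k * m + s) *
          ((p ^ k - 1) * p ^ (k * m + s) / p ^ (k * m + (k - 1)) % p) := by
        rw [sum_mul]
        refine sum_congr rfl fun s hs => ?_
        rw [pow_sub_one_mul_pow_div_pow_mod hp (by simp at hs; omega) (by simp at hs; omega)]
    _ ≤ ∑ m' ∈ range q, ∑ s ∈ range k, T (k * m' + s) *
          ((p ^ k - 1) * p ^ (k * m' + s) / p ^ (k * m + (k - 1)) % p) :=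
        single_le_sum (f := fun m' => ∑ s ∈ range k, T (k * m' + s) *
          ((p ^ k - 1) * p ^ (k * m' + s) / p ^ (k * m + (k - 1)) % p))
          (fun _ _ => Nat.zero_le _) (mem_range.2 hm)
    _ ≤ 1 * (p - 1) := by omega

theorem exists_eq_pow_of_digitwise {p k q ℓ : ℕ} {T : ℕ → ℕ} (hp : 2 ≤ p) (hk : 0 < k)
    (hq : 0 < q) (hℓ : 0 < ℓ)
    (hsum : ∑ j ∈ range (k * q), T j * ((p ^ k - 1) * p ^ j) = (p ^ (k * q) - 1) * ℓ)
    (hdigit : ∀ w, ∑ j ∈ range (k * q), T j * ((p ^ k - 1) * p ^ j / p ^ w % p) =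
      (p ^ (k * q) - 1) * ℓ / p ^ w % p) :
    ∃ r < k, ℓ = p ^ r := by
  have hν : 0 < p ^ k - 1 := Nat.sub_pos_of_lt (Nat.one_lt_pow hk.ne' (by omega))
  set Y : ℕ → ℕ := fun m => ∑ s ∈ range k, T (k * m + s) * p ^ s
  have hY : ∀ m < q, Y m = 0 ∨ ∃ s ∈ range k, Y m = p ^ s := fun m hm =>
    sum_mul_eq_zero_or_exists_of_sum_le_one _ (sum_range_le_one_of_digitwise hp hdigit hm)
  have hYle : ∀ m < q, Y m ≤ p ^ (k - 1) := by
    intro m hm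
    rcases hY m hm with h | ⟨s, hs, h⟩ <;> rw [h]
    · exact Nat.zero_le _
    · exact Nat.pow_le_pow_right (by omega) (by simp at hs; omega)
  have hX : ∑ m ∈ range q, (p ^ k) ^ m * Y m = (∑ m ∈ range q, (p ^ k) ^ m) * ℓ := by
    refine Nat.eq_of_mul_eq_mul_left hν ?_
    calc (p ^ k - 1) * ∑ m ∈ range q, (p ^ k) ^ m * Y m
        = ∑ j ∈ range (k * q), T j * ((p ^ k - 1) * p ^ j) := by
          rw [sum_range_mul_eq_sum_sum, mul_sum]
          refine sum_congr rfl fun m _ => ?_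
          simp only [Y, mul_sum]
          refine sum_congr rfl fun s _ => ?_
          rw [pow_add, pow_mul]
          ring
      _ = (p ^ k - 1) * ((∑ m ∈ range q, (p ^ k) ^ m) * ℓ) := by
          rw [hsum, pow_mul_sub_one_eq_mul_geom_sum (by omega), mul_assoc]
  have hℓY := eq_of_sum_pow_mul_eq_geom_sum_mul hq (Nat.pow_lt_pow_right (by omega) (by omega))
    hYle hX
  rcases hY 0 hq with h0 | ⟨s, hs, hs'⟩
  · omega
  · exact ⟨s, mem_range.1 hs, hℓY.trans hs'⟩

theorem isRepr_MC_of_pos {p a N : ℕ} {S : Finset ℕ} (h : 0 < MC p a S N) :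
    IsRepr p a S N (MC p a S N) :=
  Nat.sInf_mem (Nat.nonempty_of_pos_sInf h)

theorem MC_eq_of_isRepr {p a N m : ℕ} {S : Finset ℕ} (h : IsRepr p a S N m)
    (hmin : ∀ m', IsRepr p a S N m' → m ≤ m') : MC p a S N = m :=
  le_antisymm (Nat.sInf_le h) (hmin _ (Nat.sInf_mem (s := {m | IsRepr p a S N m}) ⟨m, h⟩))

theorem pk_sub_one_case_general (p a k : ℕ) (hp : p.Prime) (ha : 1 ≤ a) (hk : 0 < k)
    (hka : k ∣ a)
    (S : Finset ℕ)
    (hν : p ^ k - 1 ∈ S)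
    (hmax : ∀ i ∈ S, i ≠ p ^ k - 1 → digitSum p i < digitSum p (p ^ k - 1))
    (ℓ : ℕ) (hℓ : 0 < ℓ) :
    MC p a S ((p ^ a - 1) * ℓ) * k = a ↔ ∃ r < k, ℓ = p ^ r := by
  have hp2 := hp.two_le
  obtain ⟨q, rfl⟩ := hka
  have hq : 0 < q := Nat.pos_of_mul_pos_left ha
  have hdsν : digitSum p (p ^ k - 1) = k * (p - 1) := digitSum_pow_sub_one hp2 k
  have hN : q * digitSum p (p ^ k - 1) ≤ digitSum p ((p ^ (k * q) - 1) * ℓ) := by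
    have hpos : 0 < p ^ (k * q) - 1 := Nat.sub_pos_of_lt (Nat.one_lt_pow (by omega) (by omega))
    have := mul_sub_one_le_digitSum_of_dvd hp2 ha _ (by positivity) (dvd_mul_right _ ℓ)
    rwa [hdsν, ← mul_assoc, mul_comm q]
  have hB : ∀ i ∈ S, digitSum p i ≤ digitSum p (p ^ k - 1) := fun i hi => by
    rcases eq_or_ne i (p ^ k - 1) with rfl | hne
    exacts [le_rfl, (hmax i hi hne).le]
  have hlower : ∀ m, IsRepr p (k * q) S ((p ^ (k * q) - 1) * ℓ) m → q ≤ m := fun m hm =>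
    Nat.le_of_mul_le_mul_right (hN.trans (hm.digitSum_le hp2 hB))
      (by rw [hdsν]; exact Nat.mul_pos hk (by omega))
  constructor
  · intro hMC
    have hMCq := Nat.eq_of_mul_eq_mul_right hk (hMC.trans (mul_comm k q))
    have hrepr := isRepr_MC_of_pos (hMCq ▸ hq)
    rw [hMCq] at hrepr
    obtain ⟨T, hsum, hdigit⟩ := hrepr.exists_digitwise_of_le_digitSum hp2 hν hmax hN
    exact exists_eq_pow_of_digitwise hp2 hk hq hℓ hsum hdigit
  · rintro ⟨r, hr, rfl⟩
    have hrepr := isRepr_mul_sum_pow (p := p) (q := q) hν hr le_rfl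
    rw [← pow_mul_sub_one_eq_mul_geom_sum (by omega)] at hrepr
    rw [MC_eq_of_isRepr hrepr hlower, mul_comm]

theorem pk_sub_one_case (p a k : ℕ) (hp : p.Prime) (ha : 1 ≤ a) (hk : 0 < k)
    (hka : k ∣ a)
    (S : Finset ℕ) (hS : ∀ i ∈ S, 0 < i ∧ Nat.Coprime i p)
    (hν : p ^ k - 1 ∈ S)
    (hmax : ∀ i ∈ S, i ≠ p ^ k - 1 → digitSum p i < digitSum p (p ^ k - 1))
    (ℓ : ℕ) (hℓ : 0 < ℓ) :
    MC p a S ((p ^ a - 1) * ℓ) * k = a ↔ ∃ r < k, ℓ = p ^ r :=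
  pk_sub_one_case_general p a k hp ha hk hka S hν hmax ℓ hℓ
end
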